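/- arXiv:2507.10907 — 2 statements merged into one kernel-verified Lean document; each statement's English description precedes it below -/
import Mathlib

section
/- Let G and H be topological gyrogroups and π : G → H a continuous gyrogroup homomorphism. If π is a quotient mapping, then π is an open mapping. In particular, if π is a perfect (continuous, closed, surjective with compact fibers) homomorphism onto H, then π is open. -/
universe u

class Gyrogroup (G : Type u) where
  add : G → G → G
  zero : G
  neg : G → G
  gyr : G → G → G → G
  zero_add : ∀ x, add zero x = x
  add_zero : ∀ x, add x zero = x
  neg_add : ∀ x, add (neg x) x = zero
  add_neg : ∀ x, add x (neg x) = zero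
  gyr_bij : ∀ x y, Function.Bijective (gyr x y)
  gyr_add : ∀ x y a b, gyr x y (add a b) = add (gyr x y a) (gyr x y b)
  left_assoc : ∀ x y z, add x (add y z) = add (add x y) (gyr x y z)
  loop : ∀ x y, gyr (add x y) y = gyr x y

namespace Gyrogroup

variable {G : Type u}

instance [Gyrogroup G] : Add G := ⟨Gyrogroup.add⟩
instance [Gyrogroup G] : Zero G := ⟨Gyrogroup.zero⟩
instance [Gyrogroup G] : Neg G := ⟨Gyrogroup.neg⟩

/-- The gyrogroup cooperation `x ⊞ y = x ⊕ gyr[x, ⊖y](y)`. -/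
def coadd [Gyrogroup G] (x y : G) : G := x + gyr x (-y) y

/-- `S` is a subgyrogroup: contains the identity and is closed under `⊕`, `⊖` and the
gyroautomorphisms. -/
def IsSubgyro [Gyrogroup G] (S : Set G) : Prop :=
  (0 : G) ∈ S ∧ (∀ ⦃a b : G⦄, a ∈ S → b ∈ S → a + b ∈ S) ∧
    (∀ ⦃a : G⦄, a ∈ S → -a ∈ S) ∧
    ∀ ⦃a b c : G⦄, a ∈ S → b ∈ S → c ∈ S → gyr a b c ∈ S

/-- The subgyrogroup generated by `A`. -/
def gen [Gyrogroup G] (A : Set G) : Set G := ⋂₀ {S : Set G | IsSubgyro S ∧ A ⊆ S}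

/-- `N` is a normal subgyrogroup: the kernel of a gyrogroup homomorphism. -/
def IsNormalSubgyro [Gyrogroup G] (N : Set G) : Prop :=
  ∃ (H : Type u) (i : Gyrogroup H) (f : G → H),
    (∀ a b : G, f (a + b) = i.add (f a) (f b)) ∧ N = f ⁻¹' {i.zero}

/-- A (Hausdorff) topological gyrogroup. -/
class TopGyrogroup (G : Type u) [Gyrogroup G] [TopologicalSpace G] : Prop where
  t2 : T2Space G
  continuous_add : Continuous fun p : G × G => p.1 + p.2
  continuous_neg : Continuous fun x : G => -x

/-- `μ` is a neighborhood base at `0` consisting of gyr-invariant sets. -/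
def IsGyroNhdBase [Gyrogroup G] [TopologicalSpace G] (μ : Set (Set G)) : Prop :=
  (∀ U ∈ μ, U ∈ nhds (0 : G)) ∧ (∀ W ∈ nhds (0 : G), ∃ U ∈ μ, U ⊆ W) ∧
    ∀ U ∈ μ, ∀ x y : G, gyr x y '' U = U

/-- A strongly topological gyrogroup: some neighborhood base at `0` is gyr-invariant. -/
def StronglyTop (G : Type u) [Gyrogroup G] [TopologicalSpace G] : Prop :=
  ∃ μ : Set (Set G), IsGyroNhdBase μ

/-- `S` is a suitable set for `G`. -/
def IsSuitable [Gyrogroup G] [TopologicalSpace G] (S : Set G) : Prop :=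
  DiscreteTopology S ∧ IsClosed (S ∪ {(0 : G)}) ∧ Dense (gen S)

end Gyrogroup

open Gyrogroup

section Aux

variable {G : Type u} [Gyrogroup G]

lemma g_zero_add (x : G) : (0 : G) + x = x := Gyrogroup.zero_add x
lemma g_add_zero (x : G) : x + (0 : G) = x := Gyrogroup.add_zero x
lemma g_neg_add (x : G) : -x + x = (0 : G) := Gyrogroup.neg_add x
lemma g_add_neg (x : G) : x + -x = (0 : G) := Gyrogroup.add_neg x
lemma g_left_assoc (x y z : G) : x + (y + z) = (x + y) + gyr x y z :=
  Gyrogroup.left_assoc x y z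
lemma g_loop (x y : G) : gyr (x + y) y = gyr x y := Gyrogroup.loop x y

lemma gyro_left_cancel (a : G) {b c : G} (h : a + b = a + c) : b = c := by
  have h2 : (-a) + (a + b) = (-a) + (a + c) := by rw [h]
  have e : ∀ x : G, (-a) + (a + x) = gyr (-a) a x := by
    intro x
    rw [g_left_assoc, g_neg_add, g_zero_add]
  rw [e b, e c] at h2
  exact (Gyrogroup.gyr_bij (-a) a).1 h2

lemma gyr_zero_left (y z : G) : gyr (0 : G) y z = z := by
  apply gyro_left_cancel y
  have := g_left_assoc (0 : G) y z
  rw [g_zero_add, g_zero_add] at this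
  exact this.symm

lemma gyr_eq_id_of_add_eq_zero {x y : G} (h : x + y = 0) : ∀ z, gyr x y z = z := by
  intro z
  have hl := g_loop x y
  rw [h] at hl
  rw [← hl, gyr_zero_left]

lemma gyro_neg_add_cancel_left (a b : G) : -a + (a + b) = b := by
  rw [g_left_assoc, g_neg_add, g_zero_add]
  exact gyr_eq_id_of_add_eq_zero (g_neg_add a) b

lemma gyro_neg_neg (a : G) : -(-a) = a := by
  apply gyro_left_cancel (-a)
  rw [g_add_neg, g_neg_add]

lemma gyro_add_neg_cancel_left (a b : G) : a + (-a + b) = b := by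
  have := gyro_neg_add_cancel_left (-a) b
  rwa [gyro_neg_neg] at this

end Aux

theorem quotient_hom_isOpenMap {G : Type u} {H : Type u} [Gyrogroup G] [TopologicalSpace G]
    [TopGyrogroup G] [Gyrogroup H] [TopologicalSpace H] [TopGyrogroup H]
    (π : G → H) (hcont : Continuous π) (hhom : ∀ a b : G, π (a + b) = π a + π b) :
    (Topology.IsQuotientMap π → IsOpenMap π) ∧
      ((IsClosedMap π ∧ Function.Surjective π ∧ ∀ y : H, IsCompact (π ⁻¹' {y})) →
        IsOpenMap π) := by
  have hπ0 : π 0 = 0 := by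
    apply gyro_left_cancel (π 0)
    rw [← hhom 0 0, g_zero_add, g_add_zero]
  have hπneg : ∀ a : G, π (-a) = -(π a) := by
    intro a
    apply gyro_left_cancel (π a)
    rw [← hhom a (-a), g_add_neg, g_add_neg, hπ0]
  have key : Topology.IsQuotientMap π → IsOpenMap π := by
    intro hq
    intro U hU
    rw [← hq.isOpen_preimage]
    rw [isOpen_iff_forall_mem_open]
    intro x hx
    obtain ⟨u, huU, hpu⟩ := hx
    set g : G → G := fun w => u + (-x + w) with hg
    have hgc : Continuous g := by
      have h1 : Continuous fun w : G => (-x) + w :=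
        TopGyrogroup.continuous_add.comp (continuous_const.prodMk continuous_id)
      exact TopGyrogroup.continuous_add.comp (continuous_const.prodMk h1)
    refine ⟨g ⁻¹' U, ?_, hgc.isOpen_preimage U hU, ?_⟩
    · intro w hw
      refine ⟨g w, hw, ?_⟩
      have : π (g w) = π u + (-(π x) + π w) := by
        rw [hg]; simp only [hhom, hπneg]
      rw [this, hpu, gyro_add_neg_cancel_left]
    · show g x ∈ U
      have : g x = u := by
        rw [hg]
        show u + (-x + x) = u
        rw [g_neg_add, g_add_zero]
      rwa [this]
  refine ⟨key, ?_⟩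
  rintro ⟨hclosed, hsurj, -⟩
  exact key (hclosed.isQuotientMap hcont hsurj)
end

section
/- Let G be a topological gyrogroup and N a compact normal subgyrogroup with x ⊕ N = N ⊕ x for all x. If G is homogeneous and first-countable Hausdorff, then the quotient G/N being first-countable implies G/N is metrizable; moreover, if G is additionally separable then G/N has a countable base. -/
universe u

/-!
Translating by `x` carries a countable antitone neighbourhood basis `U` of `0` to the basis
`{w | ⊖x ⊕ w ∈ U n}` at `x`. Continuity of the operations at `0` gives Frink's condition for these
bases (for every `n` and `x` there is `m` such that an `m`-ball meeting the `m`-ball at `x` lies in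
the `n`-ball at `x`), and Frink's condition produces a countably generated uniformity inducing the
topology, hence a metric. The quotient map by the kernel `N` is open, since saturations are unions
of right translates and right translations are homeomorphisms; so `G/N` is again a topological
gyrogroup, Hausdorff because `N` is closed. Separability passes to `G/N`, and a separable
metrizable space is second countable.
-/

open Filter Topology Set TopologicalSpace

section Frink

open scoped Uniformity SetRel

variable {X : Type*} [TopologicalSpace X]

def FrinkCondition (B : ℕ → X → Set X) : Prop :=
  ∀ n x, ∃ m, ∀ y, (B m y ∩ B m x).Nonempty → B m y ⊆ B n x

variable [T0Space X]

theorem metrizableSpace_of_nhds_hasBasis_preimage_rel (E : ℕ → SetRel X X) (hanti : Antitone E)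
    (hsymm : ∀ k a b, (a, b) ∈ E k → (b, a) ∈ E k) (hcomp : ∀ k, E (k + 1) ○ E (k + 1) ⊆ E k)
    (hnhds : ∀ x, (𝓝 x).HasBasis (fun _ => True) (fun k => Prod.mk x ⁻¹' E k)) :
    MetrizableSpace X := by
  have hbasis : (⨅ k, 𝓟 (E k)).HasBasis (fun _ => True) E :=
    hasBasis_iInf_principal hanti.directed_ge
  let _ : UniformSpace X :=
    { uniformity := ⨅ k, 𝓟 (E k)
      symm := hbasis.tendsto_iff hbasis |>.2 fun k _ => ⟨k, trivial, fun p hp => hsymm k _ _ hp⟩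
      comp := by
        refine le_iInf fun k => le_principal_iff.2 ?_
        exact mem_of_superset (mem_lift' (hbasis.mem_of_mem trivial)) (hcomp k)
      nhds_eq_comap_uniformity := fun x => (hnhds x).eq_of_same_basis (hbasis.comap _) }
  have : IsCountablyGenerated (𝓤 X) := hbasis.isCountablyGenerated
  exact UniformSpace.metrizableSpace

theorem metrizableSpace_of_frinkCondition (B : ℕ → X → Set X)
    (hB : ∀ x, (𝓝 x).HasAntitoneBasis (B · x)) (hfrink : FrinkCondition B) :
    MetrizableSpace X := by
  choose F hF using hfrink
  have hB_anti (y : X) : Antitone (B · y) := (hB y).antitone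
  have hB_self (n : ℕ) (x : X) : x ∈ B n x := mem_of_mem_nhds ((hB x).mem n)
  -- `g k y` is the index of the ball at `y` used by the `k`-th entourage; it passes Frink's
  -- index `F` at every step, which is what makes `E (k + 1) ○ E (k + 1) ⊆ E k`.
  let g (k : ℕ) (y : X) : ℕ := (fun n => max (F n y) (n + 1))^[k] 0
  have hg_succ (k : ℕ) (y : X) : g (k + 1) y = max (F (g k y) y) (g k y + 1) :=
    Function.iterate_succ_apply' ..
  have hg_mono (y : X) : Monotone (g · y) :=
    monotone_nat_of_le_succ fun k => (hg_succ k y).ge.trans' (by omega)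
  have hg_ge (k : ℕ) (y : X) : k ≤ g k y := by
    induction k with
    | zero => exact Nat.zero_le _
    | succ k ih => rw [hg_succ]; omega
  have hF_le (k : ℕ) (y : X) : F (g k y) y ≤ g (k + 1) y :=
    (hg_succ k y).ge.trans' (le_max_left ..)
  have hchain (k : ℕ) (y z : X) (hyz : g (k + 1) y ≤ g (k + 1) z)
      (hmeet : (B (g (k + 1) z) z ∩ B (g (k + 1) y) y).Nonempty) :
      B (g (k + 1) z) z ⊆ B (g k y) y := by
    have hz := hB_anti z ((hF_le k y).trans hyz)
    refine hz.trans (hF (g k y) y z (hmeet.mono (inter_subset_inter hz ?_)))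
    exact hB_anti y (hF_le k y)
  let E (k : ℕ) : SetRel X X := ⋃ y, B (g k y) y ×ˢ B (g k y) y
  refine metrizableSpace_of_nhds_hasBasis_preimage_rel E ?_ ?_ ?_ ?_
  · refine antitone_nat_of_succ_le fun k => iUnion_mono fun y => ?_
    exact prod_mono (hB_anti y (hg_mono y k.le_succ)) (hB_anti y (hg_mono y k.le_succ))
  · intro k a b hab
    obtain ⟨y, ha, hb⟩ := mem_iUnion.1 hab
    exact mem_iUnion.2 ⟨y, hb, ha⟩
  · rintro k ⟨a, c⟩ ⟨b, hab, hbc⟩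
    obtain ⟨y, ha, hby⟩ := mem_iUnion.1 hab
    obtain ⟨z, hbz, hc⟩ := mem_iUnion.1 hbc
    rcases le_total (g (k + 1) y) (g (k + 1) z) with hyz | hzy
    · have hz_sub := hchain k y z hyz ⟨b, hbz, hby⟩
      exact mem_iUnion.2 ⟨y, hB_anti y (hg_mono y k.le_succ) ha, hz_sub hc⟩
    · have hy_sub := hchain k z y hzy ⟨b, hby, hbz⟩
      exact mem_iUnion.2 ⟨z, hy_sub ha, hB_anti z (hg_mono z k.le_succ) hc⟩
  · intro x
    refine (hB x).to_hasBasis (fun j _ => ⟨F j x, trivial, ?_⟩) fun k _ => ?_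
    · intro w (hw : (x, w) ∈ E (F j x))
      obtain ⟨y, hxy, hwy⟩ := mem_iUnion.1 hw
      have hy := hB_anti y (hg_ge (F j x) y)
      exact hF j x y ⟨x, hy hxy, hB_self _ x⟩ (hy hwy)
    · exact ⟨g k x, trivial, fun w hw => show (x, w) ∈ E k from mem_iUnion.2 ⟨x, hB_self _ x, hw⟩⟩

end Frink

namespace Gyrogroup

section Algebra

variable {X : Type*} [Gyrogroup X]

theorem zero_add' (x : X) : 0 + x = x := Gyrogroup.zero_add x

theorem add_zero' (x : X) : x + 0 = x := Gyrogroup.add_zero x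

theorem neg_add' (x : X) : -x + x = 0 := Gyrogroup.neg_add x

theorem add_neg' (x : X) : x + -x = 0 := Gyrogroup.add_neg x

theorem left_assoc' (x y z : X) : x + (y + z) = (x + y) + gyr x y z := Gyrogroup.left_assoc x y z

theorem loop' (x y : X) : gyr (x + y) y = gyr x y := Gyrogroup.loop x y

theorem add_left_cancel {a x y : X} (h : a + x = a + y) : x = y := by
  have h' : -a + (a + x) = -a + (a + y) := by rw [h]
  rw [left_assoc', left_assoc', neg_add', zero_add', zero_add'] at h'
  exact (gyr_bij (-a) a).injective h'

theorem gyr_zero_left (a z : X) : gyr 0 a z = z := by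
  have h := left_assoc' 0 a z
  rw [zero_add', zero_add'] at h
  exact (add_left_cancel h).symm

theorem neg_add_cancel_left (a b : X) : -a + (a + b) = b := by
  rw [left_assoc', neg_add', zero_add', ← loop', neg_add', gyr_zero_left]

theorem add_neg_cancel_left (a b : X) : a + (-a + b) = b := by
  rw [left_assoc', add_neg', zero_add', ← loop', add_neg', gyr_zero_left]

theorem gyr_eq_neg_add (x y z : X) : gyr x y z = -(x + y) + (x + (y + z)) := by
  rw [left_assoc' x y z, neg_add_cancel_left]

theorem neg_neg' (a : X) : -(-a) = a :=
  add_left_cancel (a := -a) (by rw [add_neg', neg_add'])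

theorem gyr_neg_add_gyr (a b z : X) : gyr (-a) (a + b) (gyr a b z) = z := by
  apply add_left_cancel (a := b)
  calc b + gyr (-a) (a + b) (gyr a b z)
      = (-a + (a + b)) + gyr (-a) (a + b) (gyr a b z) := by rw [neg_add_cancel_left]
    _ = -a + ((a + b) + gyr a b z) := (left_assoc' _ _ _).symm
    _ = b + z := by rw [← left_assoc', neg_add_cancel_left]

theorem coadd_add_neg_cancel (x y : X) : coadd (x + y) (-y) = x := by
  rw [coadd, neg_neg', loop', ← left_assoc', add_neg', add_zero']

theorem coadd_neg_add_cancel (x y : X) : coadd x (-y) + y = x := by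
  set c := gyr x y (-y) with hc_def
  have hc : c = -(x + y) + x := by rw [hc_def, gyr_eq_neg_add, add_neg', add_zero']
  have hxyc : (x + y) + c = x := by rw [hc, add_neg_cancel_left]
  have hgyr : gyr (x + y) c (-c) = y := by
    have hkey : gyr (-(x + y)) x y = -c := by rw [gyr_eq_neg_add, ← hc, neg_add', add_zero']
    have h := gyr_neg_add_gyr (-(x + y)) x y
    rwa [neg_neg', ← hc, hkey] at h
  calc coadd x (-y) + y = (x + c) + gyr (x + y) c (-c) := by rw [coadd, neg_neg', hgyr]
    _ = (x + c) + gyr x c (-c) := by rw [← loop' (x + y) c, hxyc]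
    _ = x := by rw [← left_assoc', add_neg', add_zero']

end Algebra

section Topology

instance TopGyrogroup.toContinuousAdd {G : Type*} [Gyrogroup G] [TopologicalSpace G]
    [TopGyrogroup G] : ContinuousAdd G :=
  ⟨TopGyrogroup.continuous_add⟩

instance TopGyrogroup.toContinuousNeg {G : Type*} [Gyrogroup G] [TopologicalSpace G]
    [TopGyrogroup G] : ContinuousNeg G :=
  ⟨TopGyrogroup.continuous_neg⟩

instance TopGyrogroup.toT2Space {G : Type*} [Gyrogroup G] [TopologicalSpace G]
    [TopGyrogroup G] : T2Space G :=
  TopGyrogroup.t2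

variable {X : Type*} [Gyrogroup X] [TopologicalSpace X] [ContinuousAdd X]

@[fun_prop]
theorem _root_.Continuous.gyr [ContinuousNeg X] {Y : Type*} [TopologicalSpace Y] {f g h : Y → X}
    (hf : Continuous f) (hg : Continuous g) (hh : Continuous h) :
    Continuous fun t => gyr (f t) (g t) (h t) := by
  simp only [gyr_eq_neg_add]
  fun_prop

@[fun_prop]
theorem _root_.Continuous.coadd [ContinuousNeg X] {Y : Type*} [TopologicalSpace Y] {f g : Y → X}
    (hf : Continuous f) (hg : Continuous g) : Continuous fun t => coadd (f t) (g t) :=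
  hf.add (hf.gyr hg.neg hg)

def addLeftHomeomorph (x : X) : X ≃ₜ X where
  toFun := (x + ·)
  invFun := (-x + ·)
  left_inv := neg_add_cancel_left x
  right_inv := add_neg_cancel_left x

def addRightHomeomorph [ContinuousNeg X] (x : X) : X ≃ₜ X where
  toFun := (· + x)
  invFun := (coadd · (-x))
  left_inv := (coadd_add_neg_cancel · x)
  right_inv := (coadd_neg_add_cancel · x)
  continuous_invFun := continuous_id.coadd continuous_const

theorem nhds_eq_comap_neg_add (x : X) : 𝓝 x = comap (-x + ·) (𝓝 0) :=
  calc 𝓝 x = 𝓝 (x + 0) := by rw [add_zero']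
    _ = comap (-x + ·) (𝓝 0) := ((addLeftHomeomorph x).symm.comap_nhds_eq 0).symm

theorem hasAntitoneBasis_nhds_preimage_neg_add {U : ℕ → Set X}
    (hU : (𝓝 (0 : X)).HasAntitoneBasis U) (x : X) :
    (𝓝 x).HasAntitoneBasis fun n => (-x + ·) ⁻¹' U n :=
  nhds_eq_comap_neg_add x ▸ hU.comap _

theorem frinkCondition_preimage_neg_add [ContinuousNeg X] {U : ℕ → Set X}
    (hU : (𝓝 (0 : X)).HasAntitoneBasis U) :
    FrinkCondition fun n (x : X) => (-x + ·) ⁻¹' U n := by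
  intro n x
  -- `-x + p` as a function of `-x + q`, `-y + q` and `-y + p`; it vanishes at the origin.
  let Φ : X × X × X → X := fun t => -x + (coadd (x + t.1) (-t.2.1) + t.2.2)
  have hΦ : Tendsto Φ (𝓝 (0, 0, 0)) (𝓝 0) := by
    refine Continuous.tendsto' (by fun_prop) _ _ ?_
    change -x + (coadd (x + 0) (-0) + 0) = 0
    rw [coadd_add_neg_cancel, add_zero', neg_add']
  have hbasis := hU.prod (hU.prod hU)
  rw [← nhds_prod_eq, ← nhds_prod_eq] at hbasis
  obtain ⟨m, hm⟩ := hbasis.mem_iff.1 (hΦ (hU.mem n))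
  refine ⟨m, fun y ⟨q, hqy, hqx⟩ p hpy => ?_⟩
  have h : (-x + q, -y + q, -y + p) ∈ Φ ⁻¹' U n := hm ⟨hqx, hqy, hpy⟩
  have hy : coadd q (-(-y + q)) = y :=
    (congrArg (coadd · _) (add_neg_cancel_left y q)).symm.trans (coadd_add_neg_cancel y _)
  simpa only [Φ, mem_preimage, add_neg_cancel_left, hy] using h

theorem metrizableSpace_of_firstCountable [ContinuousNeg X] [T0Space X]
    [FirstCountableTopology X] : MetrizableSpace X := by
  obtain ⟨U, hU⟩ := (𝓝 (0 : X)).exists_antitone_basis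
  exact metrizableSpace_of_frinkCondition _ (hasAntitoneBasis_nhds_preimage_neg_add hU)
    (frinkCondition_preimage_neg_add hU)

end Topology

section Quotient

variable {G H : Type*} [Gyrogroup G] [Gyrogroup H] {π : G → H}
  (hπ : ∀ a b, π (a + b) = π a + π b)
include hπ

theorem map_zero_of_map_add : π 0 = 0 :=
  (add_left_cancel (a := π 0) (by rw [← hπ, add_zero', add_zero'])).symm

theorem map_neg_of_map_add (a : G) : π (-a) = -π a :=
  add_left_cancel (a := π a) (by rw [← hπ, add_neg', add_neg', map_zero_of_map_add hπ])

theorem map_eq_map_iff_of_map_add {a b : G} : π a = π b ↔ π (-a + b) = 0 := by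
  rw [hπ, map_neg_of_map_add hπ]
  exact ⟨fun h => h ▸ neg_add' _, fun h => (add_left_cancel (h.trans (neg_add' _).symm)).symm⟩

theorem preimage_image_eq_iUnion_add_right (s : Set G) :
    π ⁻¹' (π '' s) = ⋃ n ∈ π ⁻¹' {0}, (· + n) '' s := by
  ext w
  simp only [mem_preimage, mem_image, mem_iUnion, mem_singleton_iff, exists_prop]
  constructor
  · rintro ⟨a, ha, haw⟩
    exact ⟨-a + w, (map_eq_map_iff_of_map_add hπ).1 haw, a, ha, add_neg_cancel_left a w⟩
  · rintro ⟨n, hn, a, ha, rfl⟩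
    refine ⟨a, ha, (map_eq_map_iff_of_map_add hπ).2 ?_⟩
    rwa [neg_add_cancel_left]

variable [TopologicalSpace G] [TopologicalSpace H]

theorem isOpenQuotientMap_of_map_add [ContinuousAdd G] [ContinuousNeg G] (hq : IsQuotientMap π) :
    IsOpenQuotientMap π := by
  refine ⟨hq.surjective, hq.continuous, fun s hs => ?_⟩
  rw [← hq.isOpen_preimage, preimage_image_eq_iUnion_add_right hπ]
  exact isOpen_biUnion fun n _ => (addRightHomeomorph n).isOpenMap s hs

theorem continuousAdd_of_isOpenQuotientMap [ContinuousAdd G] (hq : IsOpenQuotientMap π) :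
    ContinuousAdd H := by
  refine ⟨(hq.prodMap hq).continuous_comp_iff.1 ?_⟩
  have h : (fun p : H × H => p.1 + p.2) ∘ Prod.map π π = π ∘ fun p : G × G => p.1 + p.2 :=
    funext fun p => (hπ p.1 p.2).symm
  rw [h]
  exact hq.continuous.comp continuous_add

theorem continuousNeg_of_isOpenQuotientMap [ContinuousNeg G] (hq : IsOpenQuotientMap π) :
    ContinuousNeg H := by
  refine ⟨hq.continuous_comp_iff.1 ?_⟩
  have h : (fun y : H => -y) ∘ π = π ∘ fun x : G => -x :=
    funext fun x => (map_neg_of_map_add hπ x).symm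
  rw [h]
  exact hq.continuous.comp continuous_neg

theorem t2Space_of_isOpenQuotientMap [ContinuousAdd G] [ContinuousNeg G]
    (hq : IsOpenQuotientMap π) (hker : IsClosed (π ⁻¹' {0})) : T2Space H := by
  refine (t2Space_iff_of_isOpenQuotientMap hq).2 ?_
  have h : {p : G × G | π p.1 = π p.2} = (fun p : G × G => -p.1 + p.2) ⁻¹' (π ⁻¹' {0}) :=
    Set.ext fun p => map_eq_map_iff_of_map_add hπ
  rw [h]
  exact hker.preimage (by fun_prop)

end Quotient

end Gyrogroup

open Gyrogroup
theorem quotient_metrizable_of_firstCountable_general {G : Type u} [Gyrogroup G] [TopologicalSpace G]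
    [TopGyrogroup G]
    (N : Set G) (hNc : IsCompact N)
    (Q : Type u) [Gyrogroup Q] [TopologicalSpace Q] (π : G → Q)
    (hhom : ∀ a b : G, π (a + b) = π a + π b)
    (hquot : Topology.IsQuotientMap π) (hker : π ⁻¹' {(0 : Q)} = N) :
    (FirstCountableTopology Q → TopologicalSpace.MetrizableSpace Q) ∧
      (TopologicalSpace.SeparableSpace G → FirstCountableTopology Q →
        SecondCountableTopology Q) := by
  have hπ := isOpenQuotientMap_of_map_add hhom hquot
  have := continuousAdd_of_isOpenQuotientMap hhom hπ
  have := continuousNeg_of_isOpenQuotientMap hhom hπ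
  have := t2Space_of_isOpenQuotientMap hhom hπ (hker ▸ hNc.isClosed)
  have hmetrizable : FirstCountableTopology Q → MetrizableSpace Q :=
    fun _ => metrizableSpace_of_firstCountable
  refine ⟨hmetrizable, fun _ hQ => ?_⟩
  have := hmetrizable hQ
  have := hquot.separableSpace
  let := metrizableSpaceMetric Q
  exact UniformSpace.secondCountable_of_separable Q

theorem quotient_metrizable_of_firstCountable {G : Type u} [Gyrogroup G] [TopologicalSpace G]
    [TopGyrogroup G] [FirstCountableTopology G]
    (N : Set G) (hNc : IsCompact N) (hNn : IsNormalSubgyro N)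
    (hcomm : ∀ x : G, (x + ·) '' N = (· + x) '' N)
    (hhomog : ∀ a b : G, ∃ h : G ≃ₜ G, h a = b)
    (Q : Type u) [Gyrogroup Q] [TopologicalSpace Q] (π : G → Q)
    (hhom : ∀ a b : G, π (a + b) = π a + π b) (hsurj : Function.Surjective π)
    (hquot : Topology.IsQuotientMap π) (hker : π ⁻¹' {(0 : Q)} = N) :
    (FirstCountableTopology Q → TopologicalSpace.MetrizableSpace Q) ∧
      (TopologicalSpace.SeparableSpace G → FirstCountableTopology Q →
        SecondCountableTopology Q) :=
  quotient_metrizable_of_firstCountable_general N hNc Q π hhom hquot hker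
end
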